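/- The function h ↦ Φ(h) is strictly increasing on [0, ∞); in particular Φ(0) < Φ(h) for all h > 0. -/

import Mathlib

/-!
With `t = y + 1 + 2h` the radicand is `t² - 1`, and `t - √(t² - 1) = (t + √(t² - 1))⁻¹`
decreases in `t`. So the integrand equals `√y ((2y)⁻¹ - (t + √(t² - 1))⁻¹)`: it is positive,
strictly increasing in `h`, and at most `(1 + 2h) / (2 √y t)`, which is `O(y^(-1/2))` at `0` and
`O(y^(-3/2))` at `∞`. The integrals are therefore finite and inherit the strict monotonicity.
-/

open Real MeasureTheory Set

noncomputable def Phi (h : ℝ) : ℝ :=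
  ∫ y in Set.Ioi (0:ℝ),
    Real.sqrt y * (Real.sqrt ((y + 2*h) * (y + 2 + 2*h)) - (y + 1 + 2*h) + 1/(2*y))

theorem setIntegral_lt_setIntegral_of_forall_lt {X : Type*} [MeasurableSpace X] {μ : Measure X}
    {s : Set X} {f g : X → ℝ} (hs : MeasurableSet s) (hμs : μ s ≠ 0) (hf : IntegrableOn f s μ)
    (hg : IntegrableOn g s μ) (hlt : ∀ x ∈ s, f x < g x) :
    ∫ x in s, f x ∂μ < ∫ x in s, g x ∂μ := by
  rw [← sub_pos, ← integral_sub hg hf]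
  refine (setIntegral_pos_iff_support_of_nonneg_ae ?_ (hg.sub hf)).2 ?_
  · exact ae_restrict_of_forall_mem hs fun x hx => (sub_pos.2 (hlt x hx)).le
  · refine (pos_iff_ne_zero.2 hμs).trans_le (measure_mono fun x hx => ⟨?_, hx⟩)
    exact (sub_pos.2 (hlt x hx)).ne'

theorem integrableOn_Ioi_zero_of_norm_le_rpow {E : Type*} [NormedAddCommGroup E] {f : ℝ → E}
    {a b C : ℝ} (ha : -1 < a) (hb : b < -1)
    (hf : AEStronglyMeasurable f (volume.restrict (Ioi 0)))
    (h₀ : ∀ y ∈ Ioc 0 1, ‖f y‖ ≤ C * y ^ a) (h₁ : ∀ y ∈ Ioi 1, ‖f y‖ ≤ C * y ^ b) :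
    IntegrableOn f (Ioi 0) := by
  rw [← Ioc_union_Ioi_eq_Ioi zero_le_one]
  refine IntegrableOn.union ?_ ?_
  · have hint : IntegrableOn (fun y : ℝ => C * y ^ a) (Ioc 0 1) := by
      have := (intervalIntegral.intervalIntegrable_rpow' (a := 0) (b := 1) ha).const_mul C
      rwa [intervalIntegrable_iff, uIoc_of_le zero_le_one] at this
    refine hint.mono' (hf.mono_set Ioc_subset_Ioi_self) ?_
    exact ae_restrict_of_forall_mem measurableSet_Ioc h₀
  · refine ((integrableOn_Ioi_rpow_of_lt hb one_pos).const_mul C).mono'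
      (hf.mono_set (Ioi_subset_Ioi zero_le_one)) ?_
    exact ae_restrict_of_forall_mem measurableSet_Ioi h₁

noncomputable def subSqrtSqSubOne (t : ℝ) : ℝ := t - √(t ^ 2 - 1)

section subSqrtSqSubOne

variable {t : ℝ}

theorem sqrt_sq_sub_one_le_self (ht : 1 ≤ t) : √(t ^ 2 - 1) ≤ t :=
  Real.sqrt_le_iff.2 ⟨by linarith, by linarith⟩

theorem subSqrtSqSubOne_eq_inv (ht : 1 ≤ t) :
    subSqrtSqSubOne t = (t + √(t ^ 2 - 1))⁻¹ := by
  have hsq : √(t ^ 2 - 1) ^ 2 = t ^ 2 - 1 := Real.sq_sqrt (by nlinarith)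
  refine eq_inv_of_mul_eq_one_left ?_
  rw [subSqrtSqSubOne]
  linear_combination -hsq

theorem strictAntiOn_subSqrtSqSubOne : StrictAntiOn subSqrtSqSubOne (Ici 1) := by
  intro s hs t ht hst
  rw [subSqrtSqSubOne_eq_inv hs, subSqrtSqSubOne_eq_inv ht]
  have hs' : (1 : ℝ) ≤ s := hs
  have : √(s ^ 2 - 1) ≤ √(t ^ 2 - 1) := Real.sqrt_le_sqrt (by nlinarith)
  exact inv_strictAnti₀ (by positivity) (by linarith)

theorem inv_two_mul_le_subSqrtSqSubOne (ht : 1 ≤ t) : (2 * t)⁻¹ ≤ subSqrtSqSubOne t := by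
  rw [subSqrtSqSubOne_eq_inv ht]
  exact inv_anti₀ (by positivity) (by linarith [sqrt_sq_sub_one_le_self ht])

theorem subSqrtSqSubOne_lt_inv_two_mul {y : ℝ} (hy : 0 < y) (ht : y + 1 ≤ t) :
    subSqrtSqSubOne t < (2 * y)⁻¹ := by
  have hy_le : y ≤ √(t ^ 2 - 1) := Real.le_sqrt_of_sq_le (by nlinarith)
  rw [subSqrtSqSubOne_eq_inv (by linarith)]
  exact inv_strictAnti₀ (by positivity) (by linarith)

end subSqrtSqSubOne

noncomputable def phiIntegrand (h y : ℝ) : ℝ := √y * ((2 * y)⁻¹ - subSqrtSqSubOne (y + 1 + 2 * h))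

theorem Phi_eq_integral_phiIntegrand (h : ℝ) : Phi h = ∫ y in Ioi 0, phiIntegrand h y := by
  unfold Phi phiIntegrand subSqrtSqSubOne
  congr 1 with y
  ring_nf

section phiIntegrand

variable {h y : ℝ}

theorem phiIntegrand_pos (hh : 0 ≤ h) (hy : 0 < y) : 0 < phiIntegrand h y :=
  mul_pos (Real.sqrt_pos.2 hy) (sub_pos.2 (subSqrtSqSubOne_lt_inv_two_mul hy (by linarith)))

theorem strictMonoOn_phiIntegrand (hy : 0 < y) : StrictMonoOn (phiIntegrand · y) (Ici 0) := by
  intro a ha b hb hab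
  have ha' : (0 : ℝ) ≤ a := ha
  have hb' : (0 : ℝ) ≤ b := hb
  have := strictAntiOn_subSqrtSqSubOne (show 1 ≤ y + 1 + 2 * a by linarith)
    (show 1 ≤ y + 1 + 2 * b by linarith) (by linarith)
  exact mul_lt_mul_of_pos_left (by linarith) (Real.sqrt_pos.2 hy)

theorem phiIntegrand_le (hh : 0 ≤ h) (hy : 0 < y) :
    phiIntegrand h y ≤ (1 + 2 * h) / (2 * √y * (y + 1 + 2 * h)) := by
  have hsq : √y ^ 2 = y := Real.sq_sqrt hy.le
  calc phiIntegrand h y ≤ √y * ((2 * y)⁻¹ - (2 * (y + 1 + 2 * h))⁻¹) :=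
        mul_le_mul_of_nonneg_left
          (sub_le_sub_left (inv_two_mul_le_subSqrtSqSubOne (by linarith)) _) (Real.sqrt_nonneg y)
    _ = (1 + 2 * h) / (2 * √y * (y + 1 + 2 * h)) := by
        field_simp
        linear_combination (1 + 2 * h) * hsq

theorem phiIntegrand_le_rpow_neg_one_half (hh : 0 ≤ h) (hy : 0 < y) :
    phiIntegrand h y ≤ y ^ (-(1 / 2) : ℝ) := by
  rw [Real.rpow_neg hy.le, ← Real.sqrt_eq_rpow]
  refine (phiIntegrand_le hh hy).trans ?_
  rw [div_le_iff₀ (by positivity), inv_mul_eq_div, le_div_iff₀ (Real.sqrt_pos.2 hy)]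
  nlinarith [Real.sqrt_pos.2 hy]

theorem phiIntegrand_le_rpow_neg_three_halves (hh : 0 ≤ h) (hy : 0 < y) :
    phiIntegrand h y ≤ (1 + 2 * h) * y ^ (-(3 / 2) : ℝ) := by
  rw [Real.rpow_neg hy.le, show (3 / 2 : ℝ) = 1 / 2 + 1 by norm_num, Real.rpow_add hy,
    Real.rpow_one, ← Real.sqrt_eq_rpow, ← div_eq_mul_inv]
  refine (phiIntegrand_le hh hy).trans (div_le_div_of_nonneg_left (by linarith) (by positivity) ?_)
  nlinarith [Real.sqrt_pos.2 hy]

theorem measurable_phiIntegrand (h : ℝ) : Measurable (phiIntegrand h) := by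
  unfold phiIntegrand subSqrtSqSubOne
  fun_prop

end phiIntegrand

theorem integrableOn_phiIntegrand {h : ℝ} (hh : 0 ≤ h) : IntegrableOn (phiIntegrand h) (Ioi 0) := by
  refine integrableOn_Ioi_zero_of_norm_le_rpow (a := -(1 / 2)) (b := -(3 / 2)) (C := 1 + 2 * h)
    (by norm_num) (by norm_num) (measurable_phiIntegrand h).aestronglyMeasurable ?_ ?_
  · intro y hy
    rw [Real.norm_of_nonneg (phiIntegrand_pos hh hy.1).le]
    exact (phiIntegrand_le_rpow_neg_one_half hh hy.1).trans
      (le_mul_of_one_le_left (Real.rpow_nonneg hy.1.le _) (by linarith))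
  · intro y hy
    have hy0 : (0 : ℝ) < y := one_pos.trans hy
    rw [Real.norm_of_nonneg (phiIntegrand_pos hh hy0).le]
    exact phiIntegrand_le_rpow_neg_three_halves hh hy0

theorem Phi_strictMono :
    StrictMonoOn Phi (Set.Ici 0) ∧ ∀ h : ℝ, 0 < h → Phi 0 < Phi h := by
  have hmono : StrictMonoOn Phi (Ici 0) := by
    intro a ha b hb hab
    rw [Phi_eq_integral_phiIntegrand, Phi_eq_integral_phiIntegrand]
    exact setIntegral_lt_setIntegral_of_forall_lt measurableSet_Ioi (by simp)
      (integrableOn_phiIntegrand ha) (integrableOn_phiIntegrand hb)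
      fun y hy => strictMonoOn_phiIntegrand hy ha hb hab
  exact ⟨hmono, fun h hh => hmono self_mem_Ici hh.le hh⟩
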